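/- arXiv:1410.3331 — 4 statements merged into one kernel-verified Lean document; each statement's English description precedes it below -/
import Mathlib

section
/- Let A be a densely defined, closed, accretive operator in a complex Hilbert space H. Then A is m-accretive if and only if its adjoint A* is accretive. -/
/-!
For accretive `A` one has `‖x‖² + ‖A x‖² ≤ ‖x + A x‖²`, so `I + A` is injective, and its range is
closed when `A` is closed. A vector `z` orthogonal to that range lies in `D(A*)` with `A* z = -z`,
so accretivity of `A*` forces `z = 0` and `I + A` is onto.
Conversely, if `I + A` is onto, its inverse `T` is a bounded operator with `‖T w‖² ≤ Re ⟪T w, w⟫`.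
This is equivalent to `‖2T - 1‖ ≤ 1`, hence passes to `T*`; since `T* (y + A* y) = y` for
`y ∈ D(A*)`, it gives `‖y‖² ≤ ‖y‖² + Re ⟪y, A* y⟫`.
-/

open scoped InnerProductSpace

namespace ContinuousLinearMap

variable {𝕜 E : Type*} [RCLike 𝕜] [NormedAddCommGroup E] [InnerProductSpace 𝕜 E]

theorem norm_two_smul_apply_sub_sq (T : E →L[𝕜] E) (w : E) :
    ‖(2 : 𝕜) • T w - w‖ ^ 2 = 4 * (‖T w‖ ^ 2 - RCLike.re ⟪T w, w⟫_𝕜) + ‖w‖ ^ 2 := by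
  rw [@norm_sub_sq 𝕜, norm_smul, inner_smul_left, RCLike.conj_ofNat]
  simp only [RCLike.norm_ofNat, RCLike.mul_re, RCLike.ofNat_re, RCLike.ofNat_im, zero_mul,
    sub_zero]
  ring

theorem forall_norm_sq_le_re_inner_iff (T : E →L[𝕜] E) :
    (∀ w, ‖T w‖ ^ 2 ≤ RCLike.re ⟪T w, w⟫_𝕜) ↔ ‖(2 : 𝕜) • T - 1‖ ≤ 1 := by
  have key : ∀ w, ‖T w‖ ^ 2 ≤ RCLike.re ⟪T w, w⟫_𝕜 ↔ ‖((2 : 𝕜) • T - 1) w‖ ≤ ‖w‖ := by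
    intro w
    rw [← sq_le_sq₀ (norm_nonneg _) (norm_nonneg _), sub_apply, smul_apply, one_apply_eq_self,
      norm_two_smul_apply_sub_sq]
    constructor <;> intro h <;> linarith
  simp_rw [key]
  exact ⟨fun h => opNorm_le_bound _ zero_le_one (by simpa using h),
    fun h w => by simpa using le_of_opNorm_le _ h w⟩

variable [CompleteSpace E]

theorem forall_norm_sq_le_re_inner_adjoint {T : E →L[𝕜] E}
    (hT : ∀ w, ‖T w‖ ^ 2 ≤ RCLike.re ⟪T w, w⟫_𝕜) :
    ∀ w, ‖adjoint T w‖ ^ 2 ≤ RCLike.re ⟪adjoint T w, w⟫_𝕜 := by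
  rw [forall_norm_sq_le_re_inner_iff] at hT ⊢
  have : (2 : 𝕜) • adjoint T - 1 = adjoint ((2 : 𝕜) • T - 1) := by
    simp [← star_eq_adjoint, star_sub, star_smul]
  rwa [this, adjoint.norm_map]

end ContinuousLinearMap

namespace LinearPMap

variable {𝕜 E : Type*} [RCLike 𝕜] [NormedAddCommGroup E] [InnerProductSpace 𝕜 E]

def IsAccretive (A : E →ₗ.[𝕜] E) : Prop :=
  ∀ x : A.domain, 0 ≤ RCLike.re ⟪A x, (x : E)⟫_𝕜

def oneAdd (A : E →ₗ.[𝕜] E) : A.domain →ₗ[𝕜] E :=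
  A.domain.subtype + A.toFun

@[simp]
theorem oneAdd_apply (A : E →ₗ.[𝕜] E) (x : A.domain) : A.oneAdd x = x + A x :=
  rfl

namespace IsAccretive

variable {A : E →ₗ.[𝕜] E}

theorem norm_sq_add_norm_sq_le (hA : A.IsAccretive) (x : A.domain) :
    ‖(x : E)‖ ^ 2 + ‖A x‖ ^ 2 ≤ ‖A.oneAdd x‖ ^ 2 := by
  rw [oneAdd_apply, @norm_add_sq 𝕜, inner_re_symm]
  linarith [hA x]

theorem norm_le_norm_oneAdd (hA : A.IsAccretive) (x : A.domain) : ‖(x : E)‖ ≤ ‖A.oneAdd x‖ :=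
  (sq_le_sq₀ (norm_nonneg _) (norm_nonneg _)).mp <|
    (le_add_of_nonneg_right (sq_nonneg _)).trans (hA.norm_sq_add_norm_sq_le x)

theorem norm_apply_le_norm_oneAdd (hA : A.IsAccretive) (x : A.domain) : ‖A x‖ ≤ ‖A.oneAdd x‖ :=
  (sq_le_sq₀ (norm_nonneg _) (norm_nonneg _)).mp <|
    (le_add_of_nonneg_left (sq_nonneg _)).trans (hA.norm_sq_add_norm_sq_le x)

theorem injective_oneAdd (hA : A.IsAccretive) : Function.Injective A.oneAdd := by
  refine (injective_iff_map_eq_zero _).mpr fun x hx => ?_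
  have := hA.norm_le_norm_oneAdd x
  rw [hx, norm_zero, norm_le_zero_iff] at this
  exact Subtype.ext this

theorem exists_resolvent (hA : A.IsAccretive) (hsurj : Function.Surjective A.oneAdd) :
    ∃ T : E →L[𝕜] E, ∀ x : A.domain, T (A.oneAdd x) = x := by
  let e := LinearEquiv.ofBijective A.oneAdd ⟨hA.injective_oneAdd, hsurj⟩
  have he : ∀ x, e.symm (A.oneAdd x) = x := LinearEquiv.ofBijective_symm_apply_apply _
  refine ⟨(A.domain.subtype ∘ₗ e.symm.toLinearMap).mkContinuous 1 fun w => ?_, fun x => ?_⟩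
  · obtain ⟨x, rfl⟩ := hsurj w
    simpa only [LinearMap.mkContinuous_apply, LinearMap.comp_apply, LinearEquiv.coe_coe, he,
      Submodule.subtype_apply, one_mul] using hA.norm_le_norm_oneAdd x
  · simp only [LinearMap.mkContinuous_apply, LinearMap.comp_apply, LinearEquiv.coe_coe, he,
      Submodule.subtype_apply]

variable [CompleteSpace E]

theorem isAccretive_adjoint_of_surjective_oneAdd (hdense : Dense (A.domain : Set E))
    (hA : A.IsAccretive) (hsurj : Function.Surjective A.oneAdd) : A.adjoint.IsAccretive := by
  obtain ⟨T, hT⟩ := hA.exists_resolvent hsurj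
  have hfirm : ∀ w, ‖T w‖ ^ 2 ≤ RCLike.re ⟪T w, w⟫_𝕜 := by
    intro w
    obtain ⟨x, rfl⟩ := hsurj w
    rw [hT, oneAdd_apply, inner_add_right, _root_.map_add, inner_self_eq_norm_sq, inner_re_symm]
    linarith [hA x]
  have hadj : ∀ y : A.adjoint.domain,
      ContinuousLinearMap.adjoint T ((y : E) + A.adjoint y) = y := by
    intro y
    refine ext_inner_right 𝕜 fun z => ?_
    obtain ⟨x, rfl⟩ := hsurj z
    rw [ContinuousLinearMap.adjoint_inner_left, hT, oneAdd_apply, inner_add_left, inner_add_right,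
      adjoint_isFormalAdjoint hdense y x]
  intro y
  have := ContinuousLinearMap.forall_norm_sq_le_re_inner_adjoint hfirm ((y : E) + A.adjoint y)
  rw [hadj, inner_add_right, _root_.map_add, inner_self_eq_norm_sq, inner_re_symm] at this
  linarith

theorem isClosed_range_oneAdd (hA : A.IsAccretive) (hclosed : A.IsClosed) :
    _root_.IsClosed (Set.range A.oneAdd) := by
  have : CompleteSpace A.graph := hclosed.completeSpace_coe
  let L : A.graph →L[𝕜] E :=
    (ContinuousLinearMap.fst 𝕜 E E + ContinuousLinearMap.snd 𝕜 E E).comp A.graph.subtypeL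
  have hL : Set.range L = Set.range A.oneAdd := by
    ext w
    constructor
    · rintro ⟨⟨⟨a, b⟩, hp⟩, rfl⟩
      obtain ⟨x, rfl, rfl⟩ := A.mem_graph_iff.mp hp
      exact ⟨x, rfl⟩
    · rintro ⟨x, rfl⟩
      exact ⟨⟨_, A.mem_graph x⟩, rfl⟩
  have hLanti : AntilipschitzWith 1 L := L.antilipschitz_of_bound fun ⟨⟨a, b⟩, hp⟩ => by
    obtain ⟨x, rfl, rfl⟩ := A.mem_graph_iff.mp hp
    rw [NNReal.coe_one, one_mul]
    exact max_le (hA.norm_le_norm_oneAdd x) (hA.norm_apply_le_norm_oneAdd x)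
  exact hL ▸ hLanti.isClosed_range L.uniformContinuous

theorem exists_adjoint_eq_neg_of_mem_orthogonal (hdense : Dense (A.domain : Set E)) {z : E}
    (hz : z ∈ (LinearMap.range A.oneAdd)ᗮ) :
    ∃ hz' : z ∈ A.adjoint.domain, A.adjoint ⟨z, hz'⟩ = -z := by
  have h : ∀ x : A.domain, ⟪-z, (x : E)⟫_𝕜 = ⟪z, A x⟫_𝕜 := fun x => by
    have := Submodule.inner_left_of_mem_orthogonal (LinearMap.mem_range_self A.oneAdd x) hz
    rw [oneAdd_apply, inner_add_right] at this
    rw [inner_neg_left, ← add_eq_zero_iff_neg_eq, this]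
  exact ⟨mem_adjoint_domain_of_exists z ⟨-z, h⟩, adjoint_apply_eq hdense _ h⟩

theorem surjective_oneAdd_of_isAccretive_adjoint (hdense : Dense (A.domain : Set E))
    (hclosed : A.IsClosed) (hA : A.IsAccretive) (hadj : A.adjoint.IsAccretive) :
    Function.Surjective A.oneAdd := by
  have hK : _root_.IsClosed (LinearMap.range A.oneAdd : Set E) :=
    hA.isClosed_range_oneAdd hclosed
  rw [← LinearMap.range_eq_top, ← hK.submodule_topologicalClosure_eq,
    Submodule.topologicalClosure_eq_top_iff, Submodule.eq_bot_iff]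
  intro z hz
  obtain ⟨hz', hAz⟩ := exists_adjoint_eq_neg_of_mem_orthogonal hdense hz
  have h : 0 ≤ RCLike.re ⟪-z, z⟫_𝕜 := hAz ▸ hadj ⟨z, hz'⟩
  rw [inner_neg_left, _root_.map_neg, inner_self_eq_norm_sq, neg_nonneg] at h
  exact norm_eq_zero.mp ((sq_nonpos_iff _).mp h)

end IsAccretive

end LinearPMap

/-- A densely defined, closed, accretive operator `A` in a complex
Hilbert space is m-accretive if and only if its adjoint `A*` is accretive. -/
theorem closed_accretive_m_accretive_iff_adjoint_accretive
    {H : Type*} [NormedAddCommGroup H] [InnerProductSpace ℂ H] [CompleteSpace H]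
    (A : H →ₗ.[ℂ] H)
    (hdense : Dense (A.domain : Set H))
    (hclosed : IsClosed (A.graph : Set (H × H)))
    (hacc : ∀ x : A.domain, 0 ≤ (⟪A x, (x : H)⟫_ℂ).re) :
    Set.range (fun x : A.domain => (x : H) + A x) = Set.univ ↔
      ∀ y : A.adjoint.domain, 0 ≤ (⟪A.adjoint y, (y : H)⟫_ℂ).re := by
  have hA : A.IsAccretive := hacc
  rw [Set.range_eq_univ]
  exact ⟨hA.isAccretive_adjoint_of_surjective_oneAdd hdense,
    hA.surjective_oneAdd_of_isAccretive_adjoint hdense hclosed⟩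
end

section
/- Let a be a continuous accretive form on V and j ∈ L(V,H) with dense range. The following are equivalent: (i) there exists an operator A in H with D(A) = j(D_j(a)) and a(u,v) = ⟨A j(u), j(v)⟩_H for all u ∈ D_j(a), v ∈ V; (ii) D_j(a) ∩ ker j ⊆ ker T₀; (iii) D_j(a) ∩ ker j ⊆ ker T. Moreover, when these hold, j*(I+A)j(u) = Tu for all u ∈ D_j(a). -/
/-!
Because `a(u,v) = ⟨v, T₀u⟩`, a vector `f` represents `a(u,·)` exactly when `j*f = T₀u`, and
such an `f` is unique since density of the range of `j` makes `j*` injective. Hence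
`{(ju, f) : j*f = T₀u}` is a linear subspace of `H × H`, and it is the graph of an operator
(necessarily the associated one) exactly when `(0, f)` in it forces `f = 0`, which is the
condition `D_j(a) ∩ ker j ⊆ ker T₀`. On `ker j` the operators `T` and `T₀` coincide.
-/

open scoped InnerProductSpace

variable {V H : Type*} [NormedAddCommGroup V] [InnerProductSpace ℂ V] [CompleteSpace V]
  [NormedAddCommGroup H] [InnerProductSpace ℂ H] [CompleteSpace H]

/-- The space `D_j(a)` of a form `a : V × V → ℂ` with respect to `j`. -/
def Dj (a : V → V → ℂ) (j : V →L[ℂ] H) : Set V :=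
  {u : V | ∃ f : H, ∀ v : V, a u v = ⟪j v, f⟫_ℂ}

/-- `A` is the operator associated with `(a, j)`:
`D(A) = j(D_j(a))` and `a(u,v) = ⟨A j(u), j(v)⟩_H` for `u ∈ D_j(a)`, `v ∈ V`. -/
def IsAssociatedOperator (a : V → V → ℂ) (j : V →L[ℂ] H) (A : H →ₗ.[ℂ] H) : Prop :=
  (A.domain : Set H) = j '' Dj a j ∧
    ∀ u ∈ Dj a j, ∀ hju : j u ∈ A.domain, ∀ v : V,
      a u v = ⟪j v, A ⟨j u, hju⟩⟫_ℂ

open ContinuousLinearMap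

theorem DenseRange.injective_adjoint {𝕜 E F : Type*} [RCLike 𝕜]
    [NormedAddCommGroup E] [InnerProductSpace 𝕜 E] [CompleteSpace E]
    [NormedAddCommGroup F] [InnerProductSpace 𝕜 F] [CompleteSpace F]
    {j : E →L[𝕜] F} (hj : DenseRange j) : Function.Injective (adjoint j) :=
  (injective_iff_map_eq_zero _).2 fun f hf =>
    hj.eq_zero_of_inner_right 𝕜 fun v => by rw [← adjoint_inner_right, hf, inner_zero_right]

def associatedGraph (j : V →L[ℂ] H) (T₀ : V →L[ℂ] V) : Submodule ℂ (H × H) where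
  carrier := {p | ∃ u, j u = p.1 ∧ adjoint j p.2 = T₀ u}
  add_mem' := by
    rintro ⟨_, _⟩ ⟨_, _⟩ ⟨u, rfl, hu⟩ ⟨w, rfl, hw⟩
    exact ⟨u + w, by simp, by simp [hu, hw]⟩
  zero_mem' := ⟨0, by simp, by simp⟩
  smul_mem' := by
    rintro c ⟨_, _⟩ ⟨u, rfl, hu⟩
    exact ⟨c • u, by simp, by simp [hu]⟩

section AssociatedOperator

variable {a : V → V → ℂ} {j : V →L[ℂ] H} {T₀ : V →L[ℂ] V}

theorem forall_eq_inner_iff_adjoint_apply_eq (hT₀ : ∀ u v : V, a u v = ⟪v, T₀ u⟫_ℂ)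
    (u : V) (f : H) : (∀ v, a u v = ⟪j v, f⟫_ℂ) ↔ adjoint j f = T₀ u := by
  simp_rw [hT₀, ← adjoint_inner_right]
  exact ⟨fun h => (ext_inner_left ℂ h).symm, fun h v => by rw [h]⟩

theorem mem_Dj_iff (hT₀ : ∀ u v : V, a u v = ⟪v, T₀ u⟫_ℂ) {u : V} :
    u ∈ Dj a j ↔ ∃ f, adjoint j f = T₀ u :=
  exists_congr (forall_eq_inner_iff_adjoint_apply_eq hT₀ u)

theorem associatedGraph_snd_eq_zero (hj : DenseRange j)
    (hT₀ : ∀ u v : V, a u v = ⟪v, T₀ u⟫_ℂ)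
    (hker : Dj a j ∩ {u : V | j u = 0} ⊆ {u : V | T₀ u = 0}) :
    ∀ p ∈ associatedGraph j T₀, p.1 = 0 → p.2 = 0 := by
  rintro ⟨_, f⟩ ⟨u, rfl, hf⟩ (hu : j u = 0)
  have hT₀u : T₀ u = 0 := hker ⟨(mem_Dj_iff hT₀).2 ⟨f, hf⟩, hu⟩
  exact hj.injective_adjoint (by rw [hf, hT₀u, map_zero])

theorem isAssociatedOperator_toLinearPMap (hT₀ : ∀ u v : V, a u v = ⟪v, T₀ u⟫_ℂ)
    (hg : ∀ p ∈ associatedGraph j T₀, p.1 = 0 → p.2 = 0) :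
    IsAssociatedOperator a j (associatedGraph j T₀).toLinearPMap := by
  refine ⟨?_, fun u hu hju v => ?_⟩
  · ext x
    constructor
    · rintro ⟨⟨_, f⟩, ⟨u, rfl, hf⟩, rfl⟩
      exact ⟨u, (mem_Dj_iff hT₀).2 ⟨f, hf⟩, rfl⟩
    · rintro ⟨u, hu, rfl⟩
      obtain ⟨f, hf⟩ := (mem_Dj_iff hT₀).1 hu
      exact ⟨(j u, f), ⟨u, rfl, hf⟩, rfl⟩
  · obtain ⟨f, hf⟩ := (mem_Dj_iff hT₀).1 hu
    have hgraph : (j u, f) ∈ (associatedGraph j T₀).toLinearPMap.graph := by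
      rw [Submodule.toLinearPMap_graph_eq _ hg]
      exact ⟨u, rfl, hf⟩
    rw [← (LinearPMap.image_iff hju).2 hgraph]
    exact (forall_eq_inner_iff_adjoint_apply_eq hT₀ u f).2 hf v

theorem IsAssociatedOperator.adjoint_apply_eq {A : H →ₗ.[ℂ] H} (hA : IsAssociatedOperator a j A)
    (hT₀ : ∀ u v : V, a u v = ⟪v, T₀ u⟫_ℂ) {u : V} (hu : u ∈ Dj a j) (hju : j u ∈ A.domain) :
    adjoint j (A ⟨j u, hju⟩) = T₀ u :=
  (forall_eq_inner_iff_adjoint_apply_eq hT₀ u _).1 (hA.2 u hu hju)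

theorem IsAssociatedOperator.Dj_inter_ker_subset {A : H →ₗ.[ℂ] H}
    (hA : IsAssociatedOperator a j A) (hT₀ : ∀ u v : V, a u v = ⟪v, T₀ u⟫_ℂ) :
    Dj a j ∩ {u : V | j u = 0} ⊆ {u : V | T₀ u = 0} := by
  rintro u ⟨hu, hju0⟩
  have hju : j u ∈ A.domain := by
    rw [← SetLike.mem_coe, hA.1]
    exact ⟨u, hu, rfl⟩
  have hzero : (⟨j u, hju⟩ : A.domain) = 0 := Subtype.ext hju0
  change T₀ u = 0
  rw [← hA.adjoint_apply_eq hT₀ hu hju, hzero, LinearPMap.map_zero, map_zero]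

theorem exists_isAssociatedOperator_iff (hj : DenseRange j)
    (hT₀ : ∀ u v : V, a u v = ⟪v, T₀ u⟫_ℂ) :
    (∃ A : H →ₗ.[ℂ] H, IsAssociatedOperator a j A) ↔
      Dj a j ∩ {u : V | j u = 0} ⊆ {u : V | T₀ u = 0} :=
  ⟨fun ⟨_, hA⟩ => hA.Dj_inter_ker_subset hT₀, fun hker =>
    ⟨_, isAssociatedOperator_toLinearPMap hT₀ (associatedGraph_snd_eq_zero hj hT₀ hker)⟩⟩

end AssociatedOperator

theorem inter_ker_subset_ker_iff_of_eq_add_adjoint_comp {j : V →L[ℂ] H} {T₀ T : V →L[ℂ] V}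
    (hT : T = T₀ + (adjoint j).comp j) (S : Set V) :
    S ∩ {u : V | j u = 0} ⊆ {u : V | T₀ u = 0} ↔ S ∩ {u : V | j u = 0} ⊆ {u : V | T u = 0} := by
  have hTT₀ : ∀ u, j u = 0 → T u = T₀ u := fun u hu => by simp [hT, hu]
  refine forall₂_congr fun u hu => ?_
  simp only [Set.mem_ofPred_eq, hTT₀ u hu.2]

theorem existence_of_associated_operator_general
    (j : V →L[ℂ] H) (hj : DenseRange j)
    (a : V → V → ℂ)
    (T₀ : V →L[ℂ] V) (hT₀ : ∀ u v : V, a u v = ⟪v, T₀ u⟫_ℂ)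
    (T : V →L[ℂ] V) (hT : T = T₀ + (ContinuousLinearMap.adjoint j).comp j) :
    ((∃ A : H →ₗ.[ℂ] H, IsAssociatedOperator a j A) ↔
        Dj a j ∩ {u : V | j u = 0} ⊆ {u : V | T₀ u = 0}) ∧
    ((∃ A : H →ₗ.[ℂ] H, IsAssociatedOperator a j A) ↔
        Dj a j ∩ {u : V | j u = 0} ⊆ {u : V | T u = 0}) ∧
    (∀ A : H →ₗ.[ℂ] H, IsAssociatedOperator a j A →
      ∀ u ∈ Dj a j, ∀ hju : j u ∈ A.domain,
        ContinuousLinearMap.adjoint j (j u + A ⟨j u, hju⟩) = T u) := by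
  have hexists := exists_isAssociatedOperator_iff hj hT₀
  refine ⟨hexists, hexists.trans (inter_ker_subset_ker_iff_of_eq_add_adjoint_comp hT _),
    fun A hA u hu hju => ?_⟩
  rw [map_add, hA.adjoint_apply_eq hT₀ hu hju, hT, add_apply, comp_apply, add_comm]

/-- The pair `(a,j)` is associated with an operator `A` if and only if
`D_j(a) ∩ ker j ⊆ ker T₀`, if and only if `D_j(a) ∩ ker j ⊆ ker T`; moreover, in that
case `j*(I+A)j(u) = Tu` for all `u ∈ D_j(a)`. -/
theorem existence_of_associated_operator
    (j : V →L[ℂ] H) (hj : DenseRange j)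
    (a : V → V → ℂ)
    (hcont : ∃ M : ℝ, ∀ u v : V, ‖a u v‖ ≤ M * ‖u‖ * ‖v‖)
    (hacc : ∀ u : V, 0 ≤ (a u u).re)
    (T₀ : V →L[ℂ] V) (hT₀ : ∀ u v : V, a u v = ⟪v, T₀ u⟫_ℂ)
    (T : V →L[ℂ] V) (hT : T = T₀ + (ContinuousLinearMap.adjoint j).comp j) :
    ((∃ A : H →ₗ.[ℂ] H, IsAssociatedOperator a j A) ↔
        Dj a j ∩ {u : V | j u = 0} ⊆ {u : V | T₀ u = 0}) ∧
    ((∃ A : H →ₗ.[ℂ] H, IsAssociatedOperator a j A) ↔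
        Dj a j ∩ {u : V | j u = 0} ⊆ {u : V | T u = 0}) ∧
    (∀ A : H →ₗ.[ℂ] H, IsAssociatedOperator a j A →
      ∀ u ∈ Dj a j, ∀ hju : j u ∈ A.domain,
        ContinuousLinearMap.adjoint j (j u + A ⟨j u, hju⟩) = T u) :=
  existence_of_associated_operator_general j hj a T₀ hT₀ T hT
end

section
/- Let A ≥ I be an unbounded self-adjoint operator in a complex Hilbert space H and let f ∈ H with f ∉ D(A^{1/2}). Equip V = D(A^{1/2}) with inner product ⟨x,y⟩_V = ⟨A^{1/2}x, A^{1/2}y⟩_H. Then the set {x ∈ D(A) : ⟨Ax, f⟩_H = 0} is dense in V. -/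
open scoped InnerProductSpace

/-!
Coercivity makes the self-adjoint operator `A` injective with closed range, hence surjective.
Then `B` maps `D(A)` onto `D(B)` (the kernel of `B` is orthogonal to `B (B (D(A))) = H`), so
`B (D(A))` is dense in `H`. As `f ∉ D(B) = D(B*)`, the functional `x ↦ ⟪f, A x⟫ = ⟪f, B (B x)⟫`
is unbounded with respect to `‖B x‖` on `D(A)`, and the kernel of such a functional is dense
for that seminorm.
-/

namespace LinearMap

variable {𝕜 D E : Type*} [NormedField 𝕜] [AddCommGroup D] [Module 𝕜 D] [NormedAddCommGroup E]
  [NormedSpace 𝕜 E]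

theorem denseRange_comp_subtype_ker_of_unbounded {N : D →ₗ[𝕜] E} {L : D →ₗ[𝕜] 𝕜}
    (hN : DenseRange N) (hL : ∀ C : ℝ, ∃ x, C * ‖N x‖ < ‖L x‖) :
    DenseRange (N ∘ₗ (ker L).subtype) := by
  refine Metric.denseRange_iff.mpr fun c ε hε => ?_
  obtain ⟨x₀, hx₀⟩ := hN.exists_dist_lt c (half_pos hε)
  obtain ⟨w, hw⟩ := hL (2 * ‖L x₀‖ / ε)
  have hLw : L w ≠ 0 := fun h0 => hw.not_ge (by rw [h0, norm_zero]; positivity)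
  set s := L x₀ / L w
  have hsmall : ‖s • N w‖ < ε / 2 := by
    rw [norm_smul, norm_div, div_mul_eq_mul_div, div_lt_iff₀ (norm_pos_iff.mpr hLw)]
    calc ‖L x₀‖ * ‖N w‖ = ε / 2 * (2 * ‖L x₀‖ / ε * ‖N w‖) := by field_simp
      _ < ε / 2 * ‖L w‖ := mul_lt_mul_of_pos_left hw (half_pos hε)
  refine ⟨⟨x₀ - s • w, by simp [s, hLw]⟩, ?_⟩
  calc dist c (N (x₀ - s • w)) = ‖(c - N x₀) + s • N w‖ := by
        rw [dist_eq_norm, map_sub, map_smul]; abel_nf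
    _ ≤ ‖c - N x₀‖ + ‖s • N w‖ := norm_add_le _ _
    _ < ε / 2 + ε / 2 := add_lt_add (by rwa [← dist_eq_norm]) hsmall
    _ = ε := add_halves ε

end LinearMap

namespace LinearPMap

section Closed

variable {R E F : Type*} [CommRing R] [NormedAddCommGroup E] [Module R E] [CompleteSpace E]
  [NormedAddCommGroup F] [Module R F]

theorem isClosed_range_of_norm_le {T : E →ₗ.[R] F} (hT : T.IsClosed) {C : ℝ}
    (hC : ∀ x : T.domain, ‖(x : E)‖ ≤ C * ‖T x‖) : _root_.IsClosed (Set.range T) := by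
  refine isClosed_of_closure_subset fun h hh => ?_
  obtain ⟨u, hu, hlim⟩ := mem_closure_iff_seq_limit.mp hh
  choose x hx using hu
  have hcauchy : CauchySeq fun n => (x n : E) := by
    have hu := hlim.cauchySeq
    rw [cauchySeq_iff_tendsto_dist_atTop_0] at hu ⊢
    refine squeeze_zero (fun _ => dist_nonneg) (fun n => ?_) (by simpa using hu.const_mul C)
    simpa [dist_eq_norm, ← hx, T.map_sub] using hC (x n.1 - x n.2)
  obtain ⟨p, hp⟩ := cauchySeq_tendsto_of_complete hcauchy
  have hgraph : (p, h) ∈ T.graph :=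
    hT.mem_of_tendsto (hp.prodMk_nhds hlim) (Filter.Eventually.of_forall fun n => by
      simp [hx n])
  obtain ⟨y, rfl, rfl⟩ := T.mem_graph_iff.mp hgraph
  exact ⟨y, rfl⟩

end Closed

section SelfAdjoint

variable {𝕜 E : Type*} [RCLike 𝕜] [NormedAddCommGroup E] [InnerProductSpace 𝕜 E] {T : E →ₗ.[𝕜] E}

theorem norm_le_norm_apply_of_norm_sq_le_re_inner
    (hT : ∀ x : T.domain, ‖(x : E)‖ ^ 2 ≤ RCLike.re ⟪(x : E), T x⟫_𝕜) (x : T.domain) :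
    ‖(x : E)‖ ≤ ‖T x‖ := by
  have hCS : ‖(x : E)‖ ^ 2 ≤ ‖(x : E)‖ * ‖T x‖ :=
    (hT x).trans ((RCLike.re_le_norm _).trans (norm_inner_le_norm _ _))
  nlinarith [norm_nonneg (x : E), norm_nonneg (T x)]

variable [CompleteSpace E]

theorem _root_.IsSelfAdjoint.isFormalAdjoint (hT : IsSelfAdjoint T) : T.IsFormalAdjoint T := by
  simpa only [isSelfAdjoint_def.mp hT] using adjoint_isFormalAdjoint hT.dense_domain

theorem denseRange_of_isSelfAdjoint (hT : IsSelfAdjoint T)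
    (hker : ∀ x : T.domain, T x = 0 → (x : E) = 0) : DenseRange T := by
  change Dense (LinearMap.range T.toFun : Set E)
  rw [Submodule.dense_iff_topologicalClosure_eq_top, Submodule.topologicalClosure_eq_top_iff,
    Submodule.eq_bot_iff]
  intro g hg
  have hrep : ∀ x : T.domain, ⟪(0 : E), (x : E)⟫_𝕜 = ⟪g, T x⟫_𝕜 := fun x => by
    rw [inner_zero_left, eq_comm, inner_eq_zero_symm]
    exact (Submodule.mem_orthogonal _ _).mp hg _ (LinearMap.mem_range_self _ x)
  have hgraph : (g, 0) ∈ T†.graph :=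
    T†.mem_graph_iff.mpr ⟨⟨g, mem_adjoint_domain_of_exists g ⟨0, hrep⟩⟩, rfl,
      adjoint_apply_eq hT.dense_domain _ hrep⟩
  rw [isSelfAdjoint_def.mp hT] at hgraph
  obtain ⟨x, rfl, hx⟩ := T.mem_graph_iff.mp hgraph
  exact hker x hx

theorem surjective_of_isSelfAdjoint_of_norm_le (hT : IsSelfAdjoint T) {C : ℝ}
    (hC : ∀ x : T.domain, ‖(x : E)‖ ≤ C * ‖T x‖) : Function.Surjective T := by
  have hdense := denseRange_of_isSelfAdjoint hT fun x hx => by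
    simpa [hx] using hC x
  rw [← Set.range_eq_univ, ← (isClosed_range_of_norm_le hT.isClosed hC).closure_eq,
    hdense.closure_range]

end SelfAdjoint

section SqExtends

variable {𝕜 E : Type*} [RCLike 𝕜] [NormedAddCommGroup E] [InnerProductSpace 𝕜 E]
  {A B : E →ₗ.[𝕜] E}

def SqExtends (B A : E →ₗ.[𝕜] E) : Prop :=
  ∀ (x : E) (hx : x ∈ A.domain), ∃ hx₁ : x ∈ B.domain,
    ∃ hx₂ : B ⟨x, hx₁⟩ ∈ B.domain, B ⟨B ⟨x, hx₁⟩, hx₂⟩ = A ⟨x, hx⟩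

theorem SqExtends.domain_le (h : B.SqExtends A) : A.domain ≤ B.domain := fun x hx => (h x hx).1

theorem SqExtends.eq_zero_of_apply_eq_zero (h : B.SqExtends A) (hB : B.IsFormalAdjoint B)
    (hA : Function.Surjective A) {w : B.domain} (hw : B w = 0) : (w : E) = 0 := by
  refine (inner_self_eq_zero (𝕜 := 𝕜)).mp ?_
  obtain ⟨u, hu⟩ := hA w
  obtain ⟨hu₁, hu₂, hBBu⟩ := h u u.2
  calc ⟪(w : E), (w : E)⟫_𝕜 = ⟪(w : E), B ⟨B ⟨u, hu₁⟩, hu₂⟩⟫_𝕜 := by rw [hBBu, ← hu]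
    _ = 0 := by rw [← hB, hw, inner_zero_left]

theorem SqExtends.domain_subset_range (h : B.SqExtends A) (hB : B.IsFormalAdjoint B)
    (hA : Function.Surjective A) :
    (B.domain : Set E) ⊆ Set.range (B.toFun ∘ₗ Submodule.inclusion h.domain_le) := by
  intro z hz
  obtain ⟨x, hx⟩ := hA (B ⟨z, hz⟩)
  obtain ⟨hx₁, hx₂, hBBx⟩ := h x x.2
  have hker : B (⟨B ⟨x, hx₁⟩, hx₂⟩ - ⟨z, hz⟩) = 0 := by
    rw [map_sub, hBBx, ← hx, sub_self]
  exact ⟨x, sub_eq_zero.mp (h.eq_zero_of_apply_eq_zero hB hA hker)⟩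

theorem SqExtends.exists_lt_norm_inner [CompleteSpace E] (h : B.SqExtends A)
    (hB : IsSelfAdjoint B) (hA : Function.Surjective A) {f : E} (hf : f ∉ B.domain) (C : ℝ) :
    ∃ x : A.domain, C * ‖B.toFun (Submodule.inclusion h.domain_le x)‖ < ‖⟪f, A x⟫_𝕜‖ := by
  by_contra! hbd
  apply hf
  rw [← isSelfAdjoint_def.mp hB]
  refine (B.mem_adjoint_domain_iff f).mpr (AddMonoidHomClass.continuous_of_bound _ C fun z => ?_)
  obtain ⟨x, hx⟩ := h.domain_subset_range hB.isFormalAdjoint hA z.2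
  obtain ⟨hx₁, hx₂, hBBx⟩ := h x x.2
  obtain rfl : z = ⟨B ⟨x, hx₁⟩, hx₂⟩ := Subtype.ext hx.symm
  change ‖⟪f, B ⟨B ⟨x, hx₁⟩, hx₂⟩⟫_𝕜‖ ≤ C * ‖B ⟨x, hx₁⟩‖
  rw [hBBx]
  exact hbd x

end SqExtends

end LinearPMap

theorem dense_in_form_domain_of_orthogonality_general
    {H : Type*} [NormedAddCommGroup H] [InnerProductSpace ℂ H] [CompleteSpace H]
    (A : H →ₗ.[ℂ] H)
    (hAsa : A.adjoint = A)
    (hAgeI : ∀ x : A.domain, ‖(x : H)‖ ^ 2 ≤ (⟪(x : H), A x⟫_ℂ).re)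
    -- `B` is the self-adjoint square root `A^{1/2}` of `A`
    (B : H →ₗ.[ℂ] H)
    (hBsa : B.adjoint = B)
    (hBsq₁ : ∀ (x : H) (hx : x ∈ A.domain), ∃ hx₁ : x ∈ B.domain,
      ∃ hx₂ : B ⟨x, hx₁⟩ ∈ B.domain, B ⟨B ⟨x, hx₁⟩, hx₂⟩ = A ⟨x, hx⟩)
    (f : H) (hf : f ∉ B.domain) :
    -- density of `{x ∈ D(A) : ⟨Ax, f⟩ = 0}` in `V = D(B)` with norm `x ↦ ‖Bx‖`
    ∀ y : B.domain, ∀ ε : ℝ, 0 < ε →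
      ∃ (x : H) (hxA : x ∈ A.domain) (hxB : x ∈ B.domain),
        ⟪A ⟨x, hxA⟩, f⟫_ℂ = 0 ∧ ‖B ⟨x, hxB⟩ - B y‖ < ε := by
  intro y ε hε
  have hA : IsSelfAdjoint A := LinearPMap.isSelfAdjoint_def.mpr hAsa
  have hB : IsSelfAdjoint B := LinearPMap.isSelfAdjoint_def.mpr hBsa
  have hBA : B.SqExtends A := hBsq₁
  have hAsurj : Function.Surjective A :=
    LinearPMap.surjective_of_isSelfAdjoint_of_norm_le hA (C := 1)
      (by simpa using LinearPMap.norm_le_norm_apply_of_norm_sq_le_re_inner hAgeI)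
  have hdense := LinearMap.denseRange_comp_subtype_ker_of_unbounded (L := innerₛₗ ℂ f ∘ₗ A.toFun)
    (hB.dense_domain.mono (hBA.domain_subset_range hB.isFormalAdjoint hAsurj))
    (hBA.exists_lt_norm_inner hB hAsurj hf)
  obtain ⟨⟨x, hx⟩, hxy⟩ := hdense.exists_dist_lt (B y) hε
  refine ⟨x, x.2, hBA.domain_le x.2, inner_eq_zero_symm.mp hx, ?_⟩
  rwa [dist_comm, dist_eq_norm] at hxy

/-- Let `A ≥ I` be an unbounded self-adjoint operator in a complex
Hilbert space `H`, with (self-adjoint) square root `B = A^{1/2}`, and let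
`f ∈ H \ D(A^{1/2})`.  Then `{x ∈ D(A) : ⟨Ax, f⟩ = 0}` is dense in
`V = D(A^{1/2})` for the inner product `⟨x,y⟩_V = ⟨A^{1/2}x, A^{1/2}y⟩_H`. -/
theorem dense_in_form_domain_of_orthogonality
    {H : Type*} [NormedAddCommGroup H] [InnerProductSpace ℂ H] [CompleteSpace H]
    (A : H →ₗ.[ℂ] H)
    (hAdense : Dense (A.domain : Set H))
    (hAsa : A.adjoint = A)
    (hAunbounded : A.domain ≠ ⊤)
    (hAgeI : ∀ x : A.domain, ‖(x : H)‖ ^ 2 ≤ (⟪(x : H), A x⟫_ℂ).re)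
    -- `B` is the self-adjoint square root `A^{1/2}` of `A`
    (B : H →ₗ.[ℂ] H)
    (hBdense : Dense (B.domain : Set H))
    (hBsa : B.adjoint = B)
    (hBsq₁ : ∀ (x : H) (hx : x ∈ A.domain), ∃ hx₁ : x ∈ B.domain,
      ∃ hx₂ : B ⟨x, hx₁⟩ ∈ B.domain, B ⟨B ⟨x, hx₁⟩, hx₂⟩ = A ⟨x, hx⟩)
    (hBsq₂ : ∀ (x : H) (hx₁ : x ∈ B.domain), B ⟨x, hx₁⟩ ∈ B.domain → x ∈ A.domain)
    (f : H) (hf : f ∉ B.domain) :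
    -- density of `{x ∈ D(A) : ⟨Ax, f⟩ = 0}` in `V = D(B)` with norm `x ↦ ‖Bx‖`
    ∀ y : B.domain, ∀ ε : ℝ, 0 < ε →
      ∃ (x : H) (hxA : x ∈ A.domain) (hxB : x ∈ B.domain),
        ⟪A ⟨x, hxA⟩, f⟫_ℂ = 0 ∧ ‖B ⟨x, hxB⟩ - B y‖ < ε :=
  dense_in_form_domain_of_orthogonality_general A hAsa hAgeI B hBsa hBsq₁ f hf
end

section
/- Let a be a continuous accretive form, j ∈ L(V,H) with dense range, and let the dual form be a*(u,v) = conj(a(v,u)). Then V_j(a) ∩ ker j = V_j(a*) ∩ ker j and D_j(a) ∩ ker j = D_j(a*) ∩ ker j. Consequently, (a,j) is associated with an accretive operator if and only if (a*,j) is. -/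
open scoped InnerProductSpace

variable {V H : Type*} [NormedAddCommGroup V] [InnerProductSpace ℂ V] [CompleteSpace V]
  [NormedAddCommGroup H] [InnerProductSpace ℂ H] [CompleteSpace H]

/-- The space `V_j(a) = {u ∈ V : a(u,v) = 0 for all v ∈ ker j}`. -/
def Vj (a : V → V → ℂ) (j : V →L[ℂ] H) : Set V :=
  {u : V | ∀ v : V, j v = 0 → a u v = 0}

/-- The dual form `a*(u,v) = conj (a(v,u))`. -/
def dualForm (a : V → V → ℂ) : V → V → ℂ :=
  fun u v => starRingEnd ℂ (a v u)

/-! Writing `a u v = ⟪v, T₀ u⟫`, the dual form is represented by `T₀†`, and accretivity makes the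
real quadratic `t ↦ Re a(u + t w, u + t w)` nonnegative; its discriminant gives
`(Re ⟪w, (T₀ + T₀†) u⟫)² ≤ 4 Re a(w, w) Re a(u, u)`. For `u ∈ ker j` lying in `V_j(a)` or
`D_j(a)` we have `a(u, u) = 0`, hence `T₀† u = -T₀ u`, i.e. `a*(u, ·) = -a(u, ·)`, which gives
both equalities. An associated operator exists iff `{(j u, f) | T₀ u = j† f}` is the graph of a
map, i.e. (as `j` has dense range) iff `T₀` vanishes on `D_j(a) ∩ ker j`; by the same identity
this condition is symmetric in `a` and `a*`, and an operator associated with an accretive form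
is accretive. -/

set_option linter.unusedSectionVars false

open ContinuousLinearMap
open scoped InnerProduct

noncomputable def innerForm (T : V →L[ℂ] V) : V → V → ℂ := fun u v => ⟪v, T u⟫_ℂ

def IsAccretive (T : V →L[ℂ] V) : Prop := ∀ u : V, 0 ≤ (⟪u, T u⟫_ℂ).re

section

variable {T : V →L[ℂ] V}

theorem dualForm_innerForm (T : V →L[ℂ] V) : dualForm (innerForm T) = innerForm (T†) := by
  funext u v
  rw [dualForm, innerForm, innerForm, inner_conj_symm, adjoint_inner_right]

theorem IsAccretive.adjoint (hT : IsAccretive T) : IsAccretive (T†) := fun u => by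
  rw [adjoint_inner_right, ← inner_conj_symm, Complex.conj_re]
  exact hT u

theorem IsAccretive.sq_re_inner_add_adjoint_le (hT : IsAccretive T) (u w : V) :
    (⟪w, T u + (T†) u⟫_ℂ).re ^ 2 ≤ 4 * (⟪w, T w⟫_ℂ).re * (⟪u, T u⟫_ℂ).re := by
  have hquad (t : ℝ) : 0 ≤ (⟪w, T w⟫_ℂ).re * (t * t) + (⟪w, T u + (T†) u⟫_ℂ).re * t
      + (⟪u, T u⟫_ℂ).re := by
    convert hT (u + (t : ℂ) • w) using 1
    simp only [map_add, map_smul, inner_add_left, inner_add_right, inner_smul_left,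
      inner_smul_right, adjoint_inner_right, Complex.conj_ofReal, Complex.add_re,
      Complex.re_ofReal_mul, ← inner_conj_symm (T w) u, Complex.conj_re]
    ring
  have := discrim_le_zero hquad
  rw [discrim] at this
  linarith

theorem IsAccretive.adjoint_apply_eq_neg (hT : IsAccretive T) {u : V}
    (hu : (⟪u, T u⟫_ℂ).re = 0) : (T†) u = -T u := by
  have h := hT.sq_re_inner_add_adjoint_le u (T u + (T†) u)
  rw [hu, mul_zero, ← RCLike.re_eq_complex_re, inner_self_eq_norm_sq, sq_nonpos_iff,
    pow_eq_zero_iff two_ne_zero, norm_eq_zero] at h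
  exact eq_neg_of_add_eq_zero_right h

end

section

variable {T : V →L[ℂ] V} {j : V →L[ℂ] H}

theorem mem_Dj_innerForm_iff {u : V} : u ∈ Dj (innerForm T) j ↔ ∃ f : H, T u = (j†) f := by
  simp only [Dj, innerForm, Set.mem_ofPred_eq, ← adjoint_inner_right]
  exact exists_congr fun f => ⟨ext_inner_left ℂ, fun h v => by rw [h]⟩

theorem Vj_innerForm_inter_ker_subset (hT : IsAccretive T) :
    Vj (innerForm T) j ∩ {u | j u = 0} ⊆ Vj (innerForm (T†)) j ∩ {u | j u = 0} := by
  rintro u ⟨hV, hu⟩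
  have hTu : (T†) u = -T u := hT.adjoint_apply_eq_neg (by
    rw [show ⟪u, T u⟫_ℂ = 0 from hV u hu, Complex.zero_re])
  refine ⟨fun v hv => ?_, hu⟩
  rw [innerForm, hTu, inner_neg_right, neg_eq_zero]
  exact hV v hv

theorem Dj_innerForm_inter_ker_subset (hT : IsAccretive T) :
    Dj (innerForm T) j ∩ {u | j u = 0} ⊆ Dj (innerForm (T†)) j ∩ {u | j u = 0} := by
  rintro u ⟨hD, hu⟩
  obtain ⟨f, hf⟩ := mem_Dj_innerForm_iff.mp hD
  have hTu : (T†) u = -T u := hT.adjoint_apply_eq_neg (by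
    rw [hf, adjoint_inner_right, show j u = 0 from hu, inner_zero_left, Complex.zero_re])
  exact ⟨mem_Dj_innerForm_iff.mpr ⟨-f, by rw [hTu, hf, map_neg]⟩, hu⟩

theorem Vj_innerForm_inter_ker_eq (hT : IsAccretive T) :
    Vj (innerForm T) j ∩ {u | j u = 0} = Vj (innerForm (T†)) j ∩ {u | j u = 0} :=
  (Vj_innerForm_inter_ker_subset hT).antisymm <| by
    simpa only [adjoint_adjoint] using Vj_innerForm_inter_ker_subset hT.adjoint

theorem Dj_innerForm_inter_ker_eq (hT : IsAccretive T) :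
    Dj (innerForm T) j ∩ {u | j u = 0} = Dj (innerForm (T†)) j ∩ {u | j u = 0} :=
  (Dj_innerForm_inter_ker_subset hT).antisymm <| by
    simpa only [adjoint_adjoint] using Dj_innerForm_inter_ker_subset hT.adjoint

end

section

variable {j : V →L[ℂ] H}

theorem IsAssociatedOperator.re_inner_nonneg {a : V → V → ℂ} {A : H →ₗ.[ℂ] H}
    (hA : IsAssociatedOperator a j A) (ha : ∀ u : V, 0 ≤ (a u u).re) (x : A.domain) :
    0 ≤ (⟪A x, (x : H)⟫_ℂ).re := by
  obtain ⟨u, hu, hux⟩ : (x : H) ∈ j '' Dj a j := hA.1 ▸ x.2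
  have hAu := hA.2 u hu (hux ▸ x.2) u
  rw [show (⟨j u, hux ▸ x.2⟩ : A.domain) = x from Subtype.ext hux] at hAu
  rw [← inner_conj_symm, Complex.conj_re, ← hux, ← hAu]
  exact ha u

theorem IsAssociatedOperator.eq_zero_of_mem_Dj {a : V → V → ℂ} {A : H →ₗ.[ℂ] H}
    (hA : IsAssociatedOperator a j A) {u : V} (hu : u ∈ Dj a j) (hju : j u = 0) (v : V) :
    a u v = 0 := by
  have hmem : j u ∈ A.domain := (Set.ext_iff.mp hA.1 (j u)).mpr ⟨u, hu, rfl⟩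
  rw [hA.2 u hu hmem, show (⟨j u, hmem⟩ : A.domain) = 0 from Subtype.ext hju, A.map_zero,
    inner_zero_right]

variable {T : V →L[ℂ] V}

theorem exists_isAssociatedOperator_innerForm (hj : DenseRange j)
    (hT : Dj (innerForm T) j ∩ {u | j u = 0} ⊆ {u | T u = 0}) :
    ∃ A : H →ₗ.[ℂ] H, IsAssociatedOperator (innerForm T) j A := by
  let g : Submodule ℂ (H × H) := (LinearMap.ker ((T : V →ₗ[ℂ] V).coprod
      (-((j†) : H →ₗ[ℂ] V)))).map ((j : V →ₗ[ℂ] H).prodMap LinearMap.id)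
  have mem_g (x f : H) : (x, f) ∈ g ↔ ∃ u, j u = x ∧ T u = (j†) f := by
    simp [g, ← sub_eq_add_neg, sub_eq_zero, and_comm]
  have hg : ∀ p ∈ g, p.1 = 0 → p.2 = 0 := by
    rintro ⟨x, f⟩ hp (rfl : x = 0)
    obtain ⟨u, hu, hTu⟩ := (mem_g 0 f).mp hp
    have hTu0 : T u = 0 := hT ⟨mem_Dj_innerForm_iff.mpr ⟨f, hTu⟩, hu⟩
    refine hj.eq_zero_of_inner_right ℂ fun v => ?_
    rw [← adjoint_inner_right, ← hTu, hTu0, inner_zero_right]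
  refine ⟨g.toLinearPMap, ?_, fun u hu hju v => ?_⟩
  · ext x
    simp only [SetLike.mem_coe, Submodule.toLinearPMap_domain, Submodule.mem_map,
      LinearMap.fst_apply, Prod.exists, exists_and_right, exists_eq_right, mem_g, Set.mem_image,
      mem_Dj_innerForm_iff]
    exact ⟨fun ⟨f, u, hu, hf⟩ => ⟨u, ⟨f, hf⟩, hu⟩, fun ⟨u, ⟨f, hf⟩, hu⟩ => ⟨f, u, hu, hf⟩⟩
  · obtain ⟨f, hf⟩ := mem_Dj_innerForm_iff.mp hu
    have hgraph : (j u, f) ∈ g.toLinearPMap.graph := by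
      rw [Submodule.toLinearPMap_graph_eq g hg, mem_g]
      exact ⟨u, rfl, hf⟩
    rw [innerForm, hf, adjoint_inner_right,
      LinearPMap.mem_graph_snd_inj _ (LinearPMap.mem_graph _ _) hgraph rfl]

theorem exists_isAssociatedOperator_innerForm_iff (hj : DenseRange j) :
    (∃ A : H →ₗ.[ℂ] H, IsAssociatedOperator (innerForm T) j A) ↔
      Dj (innerForm T) j ∩ {u | j u = 0} ⊆ {u | T u = 0} :=
  ⟨fun ⟨_, hA⟩ u ⟨hu, hju⟩ => ext_inner_left ℂ fun v => by
      rw [inner_zero_right]; exact hA.eq_zero_of_mem_Dj hu hju v,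
    exists_isAssociatedOperator_innerForm hj⟩

theorem exists_accretive_isAssociatedOperator_innerForm_iff (hj : DenseRange j)
    (hT : IsAccretive T) :
    (∃ A : H →ₗ.[ℂ] H, (∀ x : A.domain, 0 ≤ (⟪A x, (x : H)⟫_ℂ).re) ∧
        IsAssociatedOperator (innerForm T) j A) ↔
      Dj (innerForm T) j ∩ {u | j u = 0} ⊆ {u | T u = 0} := by
  rw [← exists_isAssociatedOperator_innerForm_iff hj]
  exact ⟨fun ⟨A, _, hA⟩ => ⟨A, hA⟩, fun ⟨A, hA⟩ => ⟨A, hA.re_inner_nonneg hT, hA⟩⟩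

theorem IsAccretive.adjoint_apply_eq_zero_iff_of_mem_Dj (hT : IsAccretive T) {u : V}
    (hu : u ∈ Dj (innerForm T) j) (hju : j u = 0) : (T†) u = 0 ↔ T u = 0 := by
  obtain ⟨f, hf⟩ := hu
  rw [hT.adjoint_apply_eq_neg (by rw [show ⟪u, T u⟫_ℂ = _ from hf u, hju, inner_zero_left,
    Complex.zero_re]), neg_eq_zero]

end

theorem dual_form_kernel_intersections_general
    (j : V →L[ℂ] H) (hj : DenseRange j)
    (a : V → V → ℂ)
    (hacc : ∀ u : V, 0 ≤ (a u u).re)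
    (T₀ : V →L[ℂ] V) (hT₀ : ∀ u v : V, a u v = ⟪v, T₀ u⟫_ℂ) :
    Vj a j ∩ {u : V | j u = 0} = Vj (dualForm a) j ∩ {u : V | j u = 0} ∧
    Dj a j ∩ {u : V | j u = 0} = Dj (dualForm a) j ∩ {u : V | j u = 0} ∧
    ((∃ A : H →ₗ.[ℂ] H, (∀ x : A.domain, 0 ≤ (⟪A x, (x : H)⟫_ℂ).re) ∧
        IsAssociatedOperator a j A) ↔
      (∃ A : H →ₗ.[ℂ] H, (∀ x : A.domain, 0 ≤ (⟪A x, (x : H)⟫_ℂ).re) ∧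
        IsAssociatedOperator (dualForm a) j A)) := by
  obtain rfl : a = innerForm T₀ := funext₂ hT₀
  have hT₀acc : IsAccretive T₀ := hacc
  rw [dualForm_innerForm]
  refine ⟨Vj_innerForm_inter_ker_eq hT₀acc, Dj_innerForm_inter_ker_eq hT₀acc, ?_⟩
  rw [exists_accretive_isAssociatedOperator_innerForm_iff hj hT₀acc,
    exists_accretive_isAssociatedOperator_innerForm_iff hj hT₀acc.adjoint,
    ← Dj_innerForm_inter_ker_eq hT₀acc]
  exact forall₂_congr fun u ⟨hu, hju⟩ =>
    (hT₀acc.adjoint_apply_eq_zero_iff_of_mem_Dj hu hju).symm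

/-- For the dual form `a*`:
`V_j(a) ∩ ker j = V_j(a*) ∩ ker j`, `D_j(a) ∩ ker j = D_j(a*) ∩ ker j`, and `(a,j)` is
associated with an accretive operator iff `(a*,j)` is. -/
theorem dual_form_kernel_intersections
    (j : V →L[ℂ] H) (hj : DenseRange j)
    (a : V → V → ℂ)
    (hcont : ∃ M : ℝ, ∀ u v : V, ‖a u v‖ ≤ M * ‖u‖ * ‖v‖)
    (hacc : ∀ u : V, 0 ≤ (a u u).re)
    (T₀ : V →L[ℂ] V) (hT₀ : ∀ u v : V, a u v = ⟪v, T₀ u⟫_ℂ) :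
    Vj a j ∩ {u : V | j u = 0} = Vj (dualForm a) j ∩ {u : V | j u = 0} ∧
    Dj a j ∩ {u : V | j u = 0} = Dj (dualForm a) j ∩ {u : V | j u = 0} ∧
    ((∃ A : H →ₗ.[ℂ] H, (∀ x : A.domain, 0 ≤ (⟪A x, (x : H)⟫_ℂ).re) ∧
        IsAssociatedOperator a j A) ↔
      (∃ A : H →ₗ.[ℂ] H, (∀ x : A.domain, 0 ≤ (⟪A x, (x : H)⟫_ℂ).re) ∧
        IsAssociatedOperator (dualForm a) j A)) :=
  dual_form_kernel_intersections_general j hj a hacc T₀ hT₀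
end
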